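/- Let G be a strongly connected digraph whose underlying undirected graph G⁻ is 2-connected, and let u,v be vertices such that G⁻ \ {u,v} is disconnected. Then for each component D of G⁻ \ {u,v}, the induced subdigraph G[V(D) ∪ {u,v}] contains a directed path of length at least two, either from u to v or from v to u. -/

import Mathlib

open SimpleGraph Set

variable {V W : Type*}

/-- An embedding witnessing that `G` contains a subdivision of `H` as a subgraph:
branch vertices are given by the injection `f`, and every edge of `H` is replaced by
a path of `G`, these paths being internally disjoint from each other and from the
branch vertices. -/
structure SubdivEmb (H : SimpleGraph W) (G : SimpleGraph V) where
  f : W → V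
  inj : Function.Injective f
  walk : ∀ ⦃a b : W⦄, H.Adj a b → G.Walk (f a) (f b)
  isPath : ∀ ⦃a b : W⦄ (h : H.Adj a b), (walk h).IsPath
  symm : ∀ ⦃a b : W⦄ (h : H.Adj a b), walk h.symm = (walk h).reverse
  branch : ∀ ⦃a b : W⦄ (h : H.Adj a b) (w : W), f w ∈ (walk h).support → w = a ∨ w = b
  disjoint : ∀ ⦃a b c d : W⦄ (h₁ : H.Adj a b) (h₂ : H.Adj c d), s(a,b) ≠ s(c,d) →
    ∀ x, x ∈ (walk h₁).support → x ∈ (walk h₂).support → x ∈ Set.range f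

/-- `G` contains a subdivision of `H` as a subgraph. -/
def ContainsSubdiv (G : SimpleGraph V) (H : SimpleGraph W) : Prop :=
  Nonempty (SubdivEmb H G)

/-- Witness that `G` is (exactly) a subdivision of `H`: a subdivision embedding
covering all vertices and edges of `G`. -/
structure SubdivIso (H : SimpleGraph W) (G : SimpleGraph V) extends SubdivEmb H G where
  vert_cover : ∀ x : V, x ∈ Set.range f ∨ ∃ (a b : W) (h : H.Adj a b), x ∈ (walk h).support
  edge_cover : ∀ e ∈ G.edgeSet, ∃ (a b : W) (h : H.Adj a b), e ∈ (walk h).edges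

/-- `G` is a subdivision of `H`. -/
def IsSubdivisionOf (G : SimpleGraph V) (H : SimpleGraph W) : Prop :=
  Nonempty (SubdivIso H G)

/-- Planarity, via Kuratowski's theorem: no subdivision of `K₅` nor of `K_{3,3}`
as a subgraph. -/
def Planar (G : SimpleGraph V) : Prop :=
  ¬ ContainsSubdiv G (completeGraph (Fin 5)) ∧
  ¬ ContainsSubdiv G (completeBipartiteGraph (Fin 3) (Fin 3))

/-- Outerplanarity, via the standard characterization: no subdivision of `K₄` nor
of `K_{2,3}` as a subgraph. -/
def Outerplanar (G : SimpleGraph V) : Prop :=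
  ¬ ContainsSubdiv G (completeGraph (Fin 4)) ∧
  ¬ ContainsSubdiv G (completeBipartiteGraph (Fin 2) (Fin 3))

/-- `G` is `k`-connected. -/
def KConnected (k : ℕ) (G : SimpleGraph V) : Prop :=
  k < Nat.card V ∧ ∀ s : Set V, s.ncard < k → (G.induce sᶜ).Connected

/-- There is no cycle of `G` all of whose edges lie in `F`. -/
def NoCycleIn (G : SimpleGraph V) (F : Set (Sym2 V)) : Prop :=
  ¬ ∃ (v : V) (c : G.Walk v v), c.IsCycle ∧ ∀ e ∈ c.edges, e ∈ F

/-- A nonplanar graph is almost-planar if it is 3-connected and the set of edges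
whose deletion leaves a nonplanar graph contains no cycle (i.e. is the edge set of
a forest). -/
def AlmostPlanar (G : SimpleGraph V) : Prop :=
  ¬ Planar G ∧ KConnected 3 G ∧
    NoCycleIn G {e | e ∈ G.edgeSet ∧ ¬ Planar (G.deleteEdges {e})}

/-- The `k`-rung Möbius ladder: a cycle of length `2k` with opposite vertices joined. -/
def mobiusLadder (k : ℕ) : SimpleGraph (Fin (2*k)) :=
  SimpleGraph.fromRel (fun a b => (b : ℕ) = ((a : ℕ) + 1) % (2*k) ∨ (b : ℕ) = ((a : ℕ) + k) % (2*k))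

/-- The `k`-wheel: a cycle of length `k` plus a hub (`none`) adjacent to every cycle vertex. -/
def wheelGraph (k : ℕ) : SimpleGraph (Option (Fin k)) :=
  SimpleGraph.fromRel (fun a b =>
    match a, b with
    | some i, some j => (j : ℕ) = ((i : ℕ) + 1) % k
    | some _, none => True
    | none, some _ => True
    | none, none => False)

/-- The graph `U₈` (vertices `p_1,…,p_8` are `0,…,7`). -/
def U8 : SimpleGraph (Fin 8) :=
  SimpleGraph.fromRel (fun a b =>
    ((a:ℕ), (b:ℕ)) ∈ [(0,4),(0,6),(0,3),(1,5),(1,7),(1,3),(2,3),(2,4),(2,5),(2,6),(2,7),(4,5),(6,7)])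

/-- The graph `W₈` (vertices `b_1,…,b_8` are `0,…,7`). -/
def W8 : SimpleGraph (Fin 8) :=
  SimpleGraph.fromRel (fun a b =>
    ((a:ℕ), (b:ℕ)) ∈ [(0,1),(1,2),(1,3),(2,4),(3,4),(2,5),(3,6),(4,7),(5,7),(6,7),(0,5),(0,6),(0,4)])

/-- A digraph with a specified vertex set (so that subdigraphs on fewer vertices
make sense). -/
structure Dgraph (V : Type _) where
  verts : Set V
  Adj : V → V → Prop
  mem_of_adj : ∀ ⦃u v : V⦄, Adj u v → u ∈ verts ∧ v ∈ verts

namespace Dgraph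

/-- `D` has no loops and no directed cycles of length two. -/
def NoDigon (D : Dgraph V) : Prop := ∀ u v, D.Adj u v → ¬ D.Adj v u

/-- The underlying (simple) graph of a digraph. -/
def und (D : Dgraph V) : SimpleGraph V where
  Adj u v := u ≠ v ∧ (D.Adj u v ∨ D.Adj v u)
  symm := ⟨by
    intro u v h
    exact ⟨Ne.symm h.1, h.2.symm⟩⟩
  loopless := ⟨by
    intro v h
    exact h.1 rfl⟩

/-- Subdigraph containment. -/
def Le (D₁ D₂ : Dgraph V) : Prop :=
  D₁.verts ⊆ D₂.verts ∧ ∀ ⦃u v⦄, D₁.Adj u v → D₂.Adj u v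

/-- A walk of the underlying graph is directed if all its darts are arcs of `D`. -/
def DirWalk (D : Dgraph V) {u v : V} (w : D.und.Walk u v) : Prop :=
  ∀ d ∈ w.darts, D.Adj d.toProd.1 d.toProd.2

/-- Strong connectivity: every vertex can reach every other vertex by a directed walk. -/
def Strong (D : Dgraph V) : Prop :=
  ∀ u ∈ D.verts, ∀ v ∈ D.verts, ∃ w : D.und.Walk u v, D.DirWalk w

/-- Delete the single arc `(a,b)` from `D`. -/
def delArc (D : Dgraph V) (a b : V) : Dgraph V where
  verts := D.verts
  Adj u v := D.Adj u v ∧ ¬ (u = a ∧ v = b)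
  mem_of_adj := fun _ _ h => D.mem_of_adj h.1

/-- `D` is planar if its underlying graph is. -/
def Planar' (D : Dgraph V) : Prop := Planar D.und

/-- `D` is series-parallel if its underlying graph contains no subdivision of `K₄`. -/
def SeriesParallel (D : Dgraph V) : Prop :=
  ¬ ContainsSubdiv D.und (completeGraph (Fin 4))

end Dgraph

/-- A witness that the digraph `D` is (exactly) a directed subdivision of the digraph `H`:
each arc `a → b` of `H` is replaced by a directed path of `D` from `f a` to `f b`, these
paths being internally disjoint, avoiding branch vertices internally, and covering all
vertices and arcs of `D`. -/
structure DirSubdivEmb (H : Dgraph W) (D : Dgraph V) where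
  f : W → V
  inj : Function.Injective f
  maps_verts : ∀ w ∈ H.verts, f w ∈ D.verts
  walk : ∀ ⦃a b : W⦄, H.Adj a b → D.und.Walk (f a) (f b)
  dir : ∀ ⦃a b : W⦄ (h : H.Adj a b), D.DirWalk (walk h)
  isPath : ∀ ⦃a b : W⦄ (h : H.Adj a b), (walk h).IsPath
  branch : ∀ ⦃a b : W⦄ (h : H.Adj a b) (w : W), w ∈ H.verts →
    f w ∈ (walk h).support → w = a ∨ w = b
  disjoint : ∀ ⦃a b c d : W⦄ (h₁ : H.Adj a b) (h₂ : H.Adj c d), (a,b) ≠ (c,d) →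
    ∀ x, x ∈ (walk h₁).support → x ∈ (walk h₂).support → ∃ w ∈ H.verts, f w = x
  vert_cover : ∀ x ∈ D.verts, (∃ w ∈ H.verts, f w = x) ∨
    ∃ (a b : W) (h : H.Adj a b), x ∈ (walk h).support
  edge_cover : ∀ ⦃x y : V⦄, D.Adj x y →
    ∃ (a b : W) (h : H.Adj a b), ∃ d ∈ (walk h).darts, d.toProd = (x, y)

/-- The digraph `D` is a directed subdivision of (a copy of) `H`. -/
def Dgraph.IsDirSubdivOf (D : Dgraph V) (H : Dgraph W) : Prop :=
  Nonempty (DirSubdivEmb H D)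

/-- Build a digraph on `Fin n` from a list of arcs. -/
def arcsD (n : ℕ) (l : List (ℕ × ℕ)) : Dgraph (Fin n) where
  verts := Set.univ
  Adj a b := ((a:ℕ), (b:ℕ)) ∈ l
  mem_of_adj := fun _ _ _ => ⟨trivial, trivial⟩

/-- The digraph whose directed subdivisions are the strong thetas: two directed paths
of length two from `0` to `1` (through `2` resp. `3`) together with a directed return
path `1 → 4 → 0`. -/
def thetaD : Dgraph (Fin 5) := arcsD 5 [(0,2),(2,1),(0,3),(3,1),(1,4),(4,0)]

/-- The digraph whose directed subdivisions are the reinforced thetas: three directed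
paths of length two from `0` to `1` together with the arc `1 → 0`. -/
def reinfThetaD : Dgraph (Fin 5) := arcsD 5 [(0,2),(2,1),(0,3),(3,1),(0,4),(4,1),(1,0)]

/-- The strong directed `K₄` (the strongly connected orientation of `K₄`, unique up
to isomorphism). -/
def strongK4D : Dgraph (Fin 4) := arcsD 4 [(0,1),(1,2),(2,3),(3,0),(0,2),(1,3)]

/-- The `2k`-diwheel: a cycle of length `2k` plus a hub (`none`) adjacent to every
cycle vertex, oriented so that every triangle is a directed triangle. -/
def diwheelD (k : ℕ) : Dgraph (Option (Fin (2*k))) where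
  verts := Set.univ
  Adj a b :=
    match a, b with
    | some i, some j => Even (i:ℕ) ∧
        (((j:ℕ) = ((i:ℕ) + 1) % (2*k)) ∨ ((i:ℕ) = ((j:ℕ) + 1) % (2*k)))
    | some i, none => Odd (i:ℕ)
    | none, some i => Even (i:ℕ)
    | none, none => False
  mem_of_adj := fun _ _ _ => ⟨trivial, trivial⟩

/-- Minimality under subdigraph containment among strongly connected nonplanar digraphs. -/
def MinStrongNonplanar (G : Dgraph V) : Prop :=
  G.Strong ∧ ¬ G.Planar' ∧
    ∀ D' : Dgraph V, D'.Le G → D'.Strong → ¬ D'.Planar' →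
      (D'.verts = G.verts ∧ ∀ u v, D'.Adj u v ↔ G.Adj u v)

/-- A Kuratowski digraph: minimal strongly connected nonplanar, and not a directed
subdivision of a smaller digraph. -/
def KuratowskiDigraph (G : Dgraph V) : Prop :=
  MinStrongNonplanar G ∧
    ¬ ∃ H : Dgraph V, H.verts.ncard < G.verts.ncard ∧ G.IsDirSubdivOf H

/-- The unordered pair `{x,y}` equals `{a,b}`. -/
def pairOf (x y a b : V) : Prop := (x = a ∧ y = b) ∨ (x = b ∧ y = a)

/-- `j` follows `i` in the cyclic order on `Fin n`. -/
def CycPair (n : ℕ) (i j : Fin n) : Prop :=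
  (j:ℕ) = (i:ℕ) + 1 ∨ ((i:ℕ) = n - 1 ∧ (j:ℕ) = 0)

/-- Given the cyclic list `l` of vertices of a cycle `C`, the chords `ab` and `cd`
`C`-cross: `a,b,c,d` are distinct and both paths of `C` between `a` and `b` contain
one of `c,d` (equivalently, exactly one of `c,d` lies strictly between `a` and `b`
in the list). -/
def CCross [DecidableEq V] (l : List V) (a b c d : V) : Prop :=
  ([a, b, c, d] : List V).Nodup ∧
  ∃ x y, ((x = c ∧ y = d) ∨ (x = d ∧ y = c)) ∧
    (min (l.idxOf a) (l.idxOf b) < l.idxOf x ∧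
      l.idxOf x < max (l.idxOf a) (l.idxOf b)) ∧
    ¬ (min (l.idxOf a) (l.idxOf b) < l.idxOf y ∧
      l.idxOf y < max (l.idxOf a) (l.idxOf b))

/-- A Möbius chain: a nonplanar graph obtained from a spanning cycle `C` by adding
chords so that every two chords `C`-cross or share an end, every vertex is an end of
some chord, and no cycle consists entirely of chords. -/
def IsMobiusChain [DecidableEq V] (G : SimpleGraph V) : Prop :=
  ¬ Planar G ∧
  ∃ (v : V) (C : G.Walk v v), C.IsCycle ∧ (∀ x : V, x ∈ C.support) ∧
    (∀ a b c d : V, G.Adj a b → s(a,b) ∉ C.edges → G.Adj c d → s(c,d) ∉ C.edges →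
      s(a,b) ≠ s(c,d) →
      (a = c ∨ a = d ∨ b = c ∨ b = d) ∨ CCross C.support.tail a b c d) ∧
    (∀ x : V, ∃ y, G.Adj x y ∧ s(x,y) ∉ C.edges) ∧
    NoCycleIn G {e | e ∈ G.edgeSet ∧ e ∉ C.edges}

/-- A scallop. -/
def IsScallop (G : SimpleGraph V) : Prop :=
  KConnected 3 G ∧
  (Nonempty (G ≃g completeGraph (Fin 5)) ∨
   ∃ (n : ℕ) (hn : 3 ≤ n) (c : Fin n → V) (u v w : V),
     Function.Injective c ∧ (∀ i, c i ≠ u ∧ c i ≠ v ∧ c i ≠ w) ∧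
     u ≠ v ∧ u ≠ w ∧ v ≠ w ∧
     (∀ x : V, (∃ i, x = c i) ∨ x = u ∨ x = v ∨ x = w) ∧
     (∀ i j, CycPair n i j → G.Adj (c i) (c j)) ∧
     G.Adj u v ∧ G.Adj u (c ⟨0, by omega⟩) ∧ G.Adj u (c ⟨n-1, by omega⟩) ∧
     G.Adj v (c ⟨0, by omega⟩) ∧ G.Adj v (c ⟨n-1, by omega⟩) ∧
     G.Adj w u ∧ G.Adj w v ∧
     (∀ i : Fin n, (i:ℕ) ≠ 0 → (i:ℕ) ≠ n - 1 → G.Adj w (c i)) ∧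
     (∀ x y, G.Adj x y →
       (∃ i j, CycPair n i j ∧ pairOf x y (c i) (c j)) ∨
       pairOf x y u v ∨
       pairOf x y u (c ⟨0, by omega⟩) ∨ pairOf x y u (c ⟨n-1, by omega⟩) ∨
       pairOf x y v (c ⟨0, by omega⟩) ∨ pairOf x y v (c ⟨n-1, by omega⟩) ∨
       pairOf x y w u ∨ pairOf x y w v ∨ (∃ i, pairOf x y w (c i))))

/-- A clam. -/
def IsClam (G : SimpleGraph V) : Prop :=
  KConnected 3 G ∧
  ∃ (n : ℕ) (_ : 3 ≤ n) (c : Fin n → V) (u v : V) (j : Fin n),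
    1 ≤ (j:ℕ) ∧ (j:ℕ) ≤ n - 2 ∧
    Function.Injective c ∧ (∀ i, c i ≠ u ∧ c i ≠ v) ∧ u ≠ v ∧
    (∀ x : V, (∃ i, x = c i) ∨ x = u ∨ x = v) ∧
    (∀ i k, CycPair n i k → G.Adj (c i) (c k)) ∧
    G.Adj u v ∧
    (∀ i : Fin n, G.Adj u (c i) ↔ ((i:ℕ) ≤ (j:ℕ) ∨ (i:ℕ) = n - 1)) ∧
    (∀ i : Fin n, G.Adj v (c i) ↔ ((j:ℕ) ≤ (i:ℕ) ∨ (i:ℕ) = 0)) ∧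
    (∀ x y, G.Adj x y →
      (∃ i k, CycPair n i k ∧ pairOf x y (c i) (c k)) ∨
      pairOf x y u v ∨ (∃ i, pairOf x y u (c i)) ∨ (∃ i, pairOf x y v (c i)))

/-- A whelk. -/
def IsWhelk (G : SimpleGraph V) : Prop :=
  KConnected 3 G ∧
  ∃ (n : ℕ) (_ : 3 ≤ n) (c : Fin n → V) (u v : V) (I J : Fin n),
    1 ≤ (I:ℕ) ∧ (I:ℕ) < (J:ℕ) ∧ (J:ℕ) ≤ n - 1 ∧
    Function.Injective c ∧ (∀ i, c i ≠ u ∧ c i ≠ v) ∧ u ≠ v ∧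
    (∀ x : V, (∃ i, x = c i) ∨ x = u ∨ x = v) ∧
    (∀ i k, CycPair n i k → G.Adj (c i) (c k)) ∧
    G.Adj u v ∧
    (∀ t : Fin n, G.Adj u (c t) ↔ (t:ℕ) ≤ (J:ℕ)) ∧
    (∀ t : Fin n, G.Adj v (c t) ↔ ((J:ℕ) ≤ (t:ℕ) ∨ (t:ℕ) = (I:ℕ))) ∧
    (∀ x y, G.Adj x y →
      (∃ i k, CycPair n i k ∧ pairOf x y (c i) (c k)) ∨
      pairOf x y u v ∨ (∃ i, pairOf x y u (c i)) ∨ (∃ i, pairOf x y v (c i)))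

/-- A double wheel: a 3-connected nonplanar graph consisting of a cycle plus two
adjacent vertices `u,v`, with at most one vertex of the cycle adjacent to both. -/
def IsDoubleWheel (G : SimpleGraph V) : Prop :=
  KConnected 3 G ∧ ¬ Planar G ∧
  ∃ (n : ℕ) (_ : 3 ≤ n) (c : Fin n → V) (u v : V),
    Function.Injective c ∧ (∀ i, c i ≠ u ∧ c i ≠ v) ∧ u ≠ v ∧
    (∀ x : V, (∃ i, x = c i) ∨ x = u ∨ x = v) ∧
    (∀ i k, CycPair n i k → G.Adj (c i) (c k)) ∧
    G.Adj u v ∧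
    (∀ x y, G.Adj x y →
      (∃ i k, CycPair n i k ∧ pairOf x y (c i) (c k)) ∨
      pairOf x y u v ∨ (∃ i, pairOf x y u (c i)) ∨ (∃ i, pairOf x y v (c i))) ∧
    (∀ i k : Fin n, G.Adj u (c i) → G.Adj v (c i) → G.Adj u (c k) → G.Adj v (c k) → i = k)

/-- A conch. -/
def IsConch (G : SimpleGraph V) : Prop :=
  KConnected 3 G ∧
  ∃ (p1 p2 p3 : V) (P Q : G.Walk p1 p2) (R : G.Walk p2 p3),
    p1 ≠ p2 ∧ p2 ≠ p3 ∧ p1 ≠ p3 ∧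
    P.IsPath ∧ Q.IsPath ∧ R.IsPath ∧
    p3 ∉ P.support ∧ p3 ∉ Q.support ∧ p1 ∉ R.support ∧
    (∀ x, x ∈ P.support → x ∈ Q.support → x = p1 ∨ x = p2) ∧
    (∀ x, x ∈ P.support → x ∈ R.support → x = p2) ∧
    (∀ x, x ∈ Q.support → x ∈ R.support → x = p2) ∧
    (∀ x : V, x ∈ P.support ∨ x ∈ Q.support ∨ x ∈ R.support ∨ x = p3) ∧
    (∃ x y, x ≠ y ∧ (x ∈ P.support ∧ x ≠ p1 ∧ x ≠ p2) ∧ (y ∈ P.support ∧ y ≠ p1 ∧ y ≠ p2) ∧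
      G.Adj p3 x ∧ G.Adj p3 y) ∧
    (∃ x y, x ≠ y ∧ (x ∈ Q.support ∧ x ≠ p1 ∧ x ≠ p2) ∧ (y ∈ Q.support ∧ y ≠ p1 ∧ y ≠ p2) ∧
      G.Adj p3 x ∧ G.Adj p3 y) ∧
    (∃ x y, x ≠ y ∧ (x ∈ R.support ∧ x ≠ p2 ∧ x ≠ p3) ∧ (y ∈ R.support ∧ y ≠ p2 ∧ y ≠ p3) ∧
      G.Adj p1 x ∧ G.Adj p1 y) ∧
    (∀ a b, G.Adj a b →
      s(a,b) ∈ P.edges ∨ s(a,b) ∈ Q.edges ∨ s(a,b) ∈ R.edges ∨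
      (∃ x, ((x ∈ P.support ∨ x ∈ Q.support) ∧ x ≠ p1 ∧ x ≠ p2) ∧ pairOf a b p3 x) ∨
      (∃ x, (x ∈ R.support ∧ x ≠ p2 ∧ x ≠ p3) ∧ pairOf a b p1 x) ∨
      pairOf a b p1 p2 ∨ pairOf a b p1 p3)

/-- A mussel. -/
def IsMussel (G : SimpleGraph V) : Prop :=
  KConnected 3 G ∧
  ∃ (p1 p2 p3 : V) (P Q R : G.Walk p1 p2),
    p1 ≠ p2 ∧ p2 ≠ p3 ∧ p1 ≠ p3 ∧
    P.IsPath ∧ Q.IsPath ∧ R.IsPath ∧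
    3 ≤ P.length ∧ 3 ≤ Q.length ∧ 3 ≤ R.length ∧
    p3 ∉ P.support ∧ p3 ∉ Q.support ∧ p3 ∉ R.support ∧
    (∀ x, x ∈ P.support → x ∈ Q.support → x = p1 ∨ x = p2) ∧
    (∀ x, x ∈ P.support → x ∈ R.support → x = p1 ∨ x = p2) ∧
    (∀ x, x ∈ Q.support → x ∈ R.support → x = p1 ∨ x = p2) ∧
    (∀ x : V, x ∈ P.support ∨ x ∈ Q.support ∨ x ∈ R.support ∨ x = p3) ∧
    (∀ x, ((x ∈ P.support ∨ x ∈ Q.support ∨ x ∈ R.support) ∧ x ≠ p1 ∧ x ≠ p2) →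
      G.Adj p3 x) ∧
    ¬ (G.Adj p1 p2 ∧ G.Adj p2 p3 ∧ G.Adj p1 p3) ∧
    (∀ a b, G.Adj a b →
      s(a,b) ∈ P.edges ∨ s(a,b) ∈ Q.edges ∨ s(a,b) ∈ R.edges ∨
      (∃ x, ((x ∈ P.support ∨ x ∈ Q.support ∨ x ∈ R.support) ∧ x ≠ p1 ∧ x ≠ p2) ∧
        pairOf a b p3 x) ∨
      pairOf a b p1 p2 ∨ pairOf a b p1 p3 ∨ pairOf a b p2 p3)

/-- `O` is an orientation of `G`. -/
def IsOrientation (G : SimpleGraph V) (O : V → V → Prop) : Prop :=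
  (∀ u v, G.Adj u v ↔ (O u v ∨ O v u)) ∧ ∀ u v, O u v → ¬ O v u

/-- Every fundamental cycle of the spanning tree `T` of `G` is a directed cycle in
the orientation `O`. -/
def GoodOrient (G T : SimpleGraph V) (O : V → V → Prop) : Prop :=
  ∀ x y, G.Adj x y → ¬ T.Adj x y → ∀ p : T.Walk y x, p.IsPath →
    (O x y ∧ ∀ d ∈ p.darts, O d.toProd.1 d.toProd.2) ∨
    (O y x ∧ ∀ d ∈ p.darts, O d.toProd.2 d.toProd.1)

/-- The rungs of the `k`-rung Möbius ladder. -/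
def isRung (k : ℕ) (a b : Fin (2*k)) : Prop :=
  (b:ℕ) = ((a:ℕ) + k) % (2*k) ∨ (a:ℕ) = ((b:ℕ) + k) % (2*k)

/-!
Let `I` be the vertex set of `K` and call `x ∈ I` *`u`-reachable* if some directed walk from `u`
enters `I` and then stays in `I` until it reaches `x`; similarly for `v`. Strong connectivity makes
every vertex of `I` `u`-reachable or `v`-reachable (look at the last entry into `I` of a directed
walk from `u`), and lets every vertex of `I` leave `I` by a directed walk inside `I` followed by an
arc into `u` or `v`. So if there were no directed `u`–`v` or `v`–`u` path through `I`, no vertex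
would be both `u`- and `v`-reachable, and `u`-reachability would spread along every edge of
`G⁻[I]`. As `G⁻ - v` is connected, `u` has a neighbour `p ∈ I`; `p` is `u`-reachable, whichever way
the edge `up` is directed. Likewise some vertex of `I` is `v`-reachable, contradicting the
connectivity of `G⁻[I]`.
-/

open Relation

namespace Relation.ReflTransGen

variable {α : Type*} {r : α → α → Prop} {s : Set α} {x y : α}

theorem exists_exit (h : ReflTransGen r x y) (hx : x ∈ s) (hy : y ∉ s) :
    ∃ z ∈ s, ∃ b ∉ s, ReflTransGen (fun p q => r p q ∧ q ∈ s) x z ∧ r z b := by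
  induction h using ReflTransGen.head_induction_on with
  | refl => exact absurd hx hy
  | @head x c hxc _ ih =>
    by_cases hc : c ∈ s
    · obtain ⟨z, hz, b, hb, hcz, hzb⟩ := ih hc
      exact ⟨z, hz, b, hb, .head ⟨hxc, hc⟩ hcz, hzb⟩
    · exact ⟨x, hx, c, hc, .refl, hxc⟩

theorem exists_entry (h : ReflTransGen r y x) (hy : y ∉ s) (hx : x ∈ s) :
    ∃ a ∉ s, ∃ z ∈ s, r a z ∧ ReflTransGen (fun p q => r p q ∧ q ∈ s) z x := by
  induction h with
  | refl => exact absurd hx hy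
  | @tail c x _ hcx ih =>
    by_cases hc : c ∈ s
    · obtain ⟨a, ha, z, hz, haz, hzc⟩ := ih hc
      exact ⟨a, ha, z, hz, haz, hzc.tail ⟨hcx, hx⟩⟩
    · exact ⟨c, hc, x, hx, hcx, .refl⟩

end Relation.ReflTransGen

namespace SimpleGraph

variable {G : SimpleGraph V} {I : Set V} {u v : V}

structure IsComponentAttachedTo (G : SimpleGraph V) (I : Set V) (u v : V) : Prop where
  left_notMem : u ∉ I
  right_notMem : v ∉ I
  connected : (G.induce I).Connected
  eq_or_eq_of_adj : ∀ x ∈ I, ∀ y ∉ I, G.Adj x y → y = u ∨ y = v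
  exists_adj_left : ∃ x ∈ I, G.Adj x u
  exists_adj_right : ∃ x ∈ I, G.Adj x v

theorem IsComponentAttachedTo.symm (h : G.IsComponentAttachedTo I u v) :
    G.IsComponentAttachedTo I v u :=
  ⟨h.right_notMem, h.left_notMem, h.connected,
    fun x hx y hy hxy => (h.eq_or_eq_of_adj x hx y hy hxy).symm,
    h.exists_adj_right, h.exists_adj_left⟩

theorem exists_adj_of_connected_induce_compl (hconn : (G.induce {v}ᶜ).Connected)
    (hI : I.Nonempty) (hu : u ∉ I) (hv : v ∉ I) (huv : u ≠ v)
    (hbdry : ∀ x ∈ I, ∀ y ∉ I, G.Adj x y → y = u ∨ y = v) : ∃ x ∈ I, G.Adj x u := by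
  obtain ⟨x, hx⟩ := hI
  obtain ⟨w⟩ := hconn.preconnected ⟨x, fun h => hv (h ▸ hx)⟩ ⟨u, huv⟩
  obtain ⟨d, -, hd, hd'⟩ := w.exists_boundary_dart {y : ({v}ᶜ : Set V) | (y : V) ∈ I} hx hu
  rcases hbdry _ hd _ hd' d.adj with h | h
  · exact ⟨_, hd, h ▸ d.adj⟩
  · exact absurd h d.snd.2

theorem ConnectedComponent.isComponentAttachedTo (huv : u ≠ v)
    (hu : (G.induce {u}ᶜ).Connected) (hv : (G.induce {v}ᶜ).Connected)
    (K : (G.induce {u, v}ᶜ).ConnectedComponent) :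
    G.IsComponentAttachedTo ((↑) '' K.supp) u v := by
  have hu' : u ∉ ((↑) '' K.supp : Set V) := by
    rintro ⟨y, -, hy⟩
    exact y.2 (by simp [hy])
  have hv' : v ∉ ((↑) '' K.supp : Set V) := by
    rintro ⟨y, -, hy⟩
    exact y.2 (by simp [hy])
  have hbdry : ∀ x ∈ ((↑) '' K.supp : Set V), ∀ y ∉ ((↑) '' K.supp : Set V),
      G.Adj x y → y = u ∨ y = v := by
    rintro _ ⟨x, hx, rfl⟩ y hy hxy
    by_contra! hne
    have hy' : y ∈ ({u, v}ᶜ : Set V) := by simp [hne.1, hne.2]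
    exact hy ⟨⟨y, hy'⟩, K.mem_supp_of_adj_mem_supp hx hxy, rfl⟩
  have hne : ((↑) '' K.supp : Set V).Nonempty := K.nonempty_supp.image _
  have hsurj : Function.Surjective
      (induceHom (Embedding.induce (G := G) {u, v}ᶜ).toHom (mapsTo_image _ K.supp)) := by
    rintro ⟨_, y, hy, rfl⟩
    exact ⟨⟨y, hy⟩, rfl⟩
  exact ⟨hu', hv', K.maximal_connected_induce_supp.prop.map _ hsurj, hbdry,
    exists_adj_of_connected_induce_compl hv hne hu' hv' huv hbdry,
    exists_adj_of_connected_induce_compl hu hne hv' hu' huv.symm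
      fun x hx y hy hxy => (hbdry x hx y hy hxy).symm⟩

end SimpleGraph

namespace Dgraph

variable {D : Dgraph V} {I : Set V} {u v a b x y z : V}

theorem DirWalk.reflTransGen {w : D.und.Walk a b} (hw : D.DirWalk w) :
    ReflTransGen D.Adj a b := by
  induction w with
  | nil => exact .refl
  | cons _ w ih =>
    exact .head (hw _ List.mem_cons_self) (ih fun d hd => hw d (List.mem_cons_of_mem _ hd))

theorem DirWalk.concat {w : D.und.Walk a b} (hw : D.DirWalk w) (h : D.und.Adj b z)
    (hbz : D.Adj b z) : D.DirWalk (w.concat h) := by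
  intro d hd
  rw [Walk.darts_concat, List.concat_eq_append, List.mem_append, List.mem_singleton] at hd
  rcases hd with hd | rfl
  exacts [hw d hd, hbz]

theorem DirWalk.bypass [DecidableEq V] {w : D.und.Walk a b} (hw : D.DirWalk w) :
    D.DirWalk w.bypass :=
  fun d hd => hw d (w.darts_bypass_subset_darts hd)

abbrev ReachesThrough (D : Dgraph V) (I : Set V) : V → V → Prop :=
  ReflTransGen fun p q => D.Adj p q ∧ q ∈ I

def HasDirWalkThrough (D : Dgraph V) (I : Set V) (a b : V) : Prop :=
  ∃ z ∈ I, D.ReachesThrough I a z ∧ D.Adj z b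

theorem ReachesThrough.exists_dirWalk (h : D.ReachesThrough I a x) :
    ∃ w : D.und.Walk a x, D.DirWalk w ∧ ∀ y ∈ w.support, y = a ∨ y ∈ I := by
  induction h with
  | refl => exact ⟨.nil, by simp [DirWalk], by simp⟩
  | @tail p q _ hpq ih =>
    obtain ⟨w, hw, hsupp⟩ := ih
    by_cases hpq' : p = q
    · exact hpq' ▸ ⟨w, hw, hsupp⟩
    · have hadj : D.und.Adj p q := ⟨hpq', .inl hpq.1⟩
      refine ⟨w.concat hadj, hw.concat hadj hpq.1, fun y hy => ?_⟩
      rw [Walk.support_concat, List.mem_append, List.mem_singleton] at hy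
      rcases hy with hy | rfl
      exacts [hsupp y hy, .inr hpq.2]

theorem HasDirWalkThrough.exists_dirPath (h : D.HasDirWalkThrough I a b) (ha : a ∉ I)
    (hb : b ∉ I) (hab : a ≠ b) :
    ∃ w : D.und.Walk a b, D.DirWalk w ∧ w.IsPath ∧ 2 ≤ w.length ∧
      ∀ y ∈ w.support, y = a ∨ y = b ∨ y ∈ I := by
  classical
  obtain ⟨z, hz, haz, hzb⟩ := h
  obtain ⟨w, hw, hsupp⟩ := haz.exists_dirWalk
  have hsupp' : ∀ y ∈ w.bypass.support, y = a ∨ y ∈ I :=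
    fun y hy => hsupp y (w.support_bypass_subset_support hy)
  have hbw : b ∉ w.bypass.support := fun h => (hsupp' b h).elim (hab ·.symm) hb
  have hzb' : D.und.Adj z b := ⟨fun h => hb (h ▸ hz), .inl hzb⟩
  have hlen : w.bypass.length ≠ 0 := fun h => ha (Walk.eq_of_length_eq_zero h ▸ hz)
  refine ⟨w.bypass.concat hzb', hw.bypass.concat hzb' hzb, w.bypass_isPath.concat hbw hzb',
    by rw [Walk.length_concat]; omega, fun y hy => ?_⟩
  rw [Walk.support_concat, List.mem_append, List.mem_singleton] at hy
  rcases hy with hy | rfl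
  · exact (hsupp' y hy).imp_right .inr
  · exact .inr (.inl rfl)

theorem reachesThrough_or_reachesThrough (hstrong : ∀ x y, ReflTransGen D.Adj x y)
    (hI : D.und.IsComponentAttachedTo I u v) (hx : x ∈ I) :
    D.ReachesThrough I u x ∨ D.ReachesThrough I v x := by
  obtain ⟨a, ha, z, hz, haz, hzx⟩ := (hstrong u x).exists_entry hI.left_notMem hx
  rcases hI.eq_or_eq_of_adj z hz a ha ⟨fun h => ha (h ▸ hz), .inr haz⟩ with rfl | rfl
  exacts [.inl (.head ⟨haz, hz⟩ hzx), .inr (.head ⟨haz, hz⟩ hzx)]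

theorem exists_reachesThrough_adj (hstrong : ∀ x y, ReflTransGen D.Adj x y)
    (hI : D.und.IsComponentAttachedTo I u v) (hx : x ∈ I) :
    ∃ z ∈ I, D.ReachesThrough I x z ∧ (D.Adj z u ∨ D.Adj z v) := by
  obtain ⟨z, hz, b, hb, hxz, hzb⟩ := (hstrong x u).exists_exit hx hI.left_notMem
  rcases hI.eq_or_eq_of_adj z hz b hb ⟨fun h => hb (h ▸ hz), .inl hzb⟩ with rfl | rfl
  exacts [⟨z, hz, hxz, .inl hzb⟩, ⟨z, hz, hxz, .inr hzb⟩]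

theorem not_reachesThrough_of_reachesThrough (hstrong : ∀ x y, ReflTransGen D.Adj x y)
    (hI : D.und.IsComponentAttachedTo I u v) (huv : ¬ D.HasDirWalkThrough I u v)
    (hvu : ¬ D.HasDirWalkThrough I v u) (hx : x ∈ I) (hux : D.ReachesThrough I u x) :
    ¬ D.ReachesThrough I v x := fun hvx => by
  obtain ⟨z, hz, hxz, hzu | hzv⟩ := exists_reachesThrough_adj hstrong hI hx
  · exact hvu ⟨z, hz, hvx.trans hxz, hzu⟩
  · exact huv ⟨z, hz, hux.trans hxz, hzv⟩

theorem exists_reachesThrough_left (hstrong : ∀ x y, ReflTransGen D.Adj x y)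
    (hI : D.und.IsComponentAttachedTo I u v) (hvu : ¬ D.HasDirWalkThrough I v u) :
    ∃ x ∈ I, D.ReachesThrough I u x := by
  obtain ⟨x, hx, hxu⟩ := hI.exists_adj_left
  rcases hxu.2 with hxu | hux
  · refine ⟨x, hx, (reachesThrough_or_reachesThrough hstrong hI hx).resolve_right ?_⟩
    exact fun hvx => hvu ⟨x, hx, hvx, hxu⟩
  · exact ⟨x, hx, .single ⟨hux, hx⟩⟩

theorem ReachesThrough.of_adj (hstrong : ∀ x y, ReflTransGen D.Adj x y)
    (hI : D.und.IsComponentAttachedTo I u v) (huv : ¬ D.HasDirWalkThrough I u v)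
    (hvu : ¬ D.HasDirWalkThrough I v u) (hux : D.ReachesThrough I u x) (hx : x ∈ I)
    (hy : y ∈ I) (hxy : D.und.Adj x y) : D.ReachesThrough I u y := by
  rcases hxy.2 with hxy | hyx
  · exact hux.tail ⟨hxy, hy⟩
  · refine (reachesThrough_or_reachesThrough hstrong hI hy).resolve_right fun hvy => ?_
    exact not_reachesThrough_of_reachesThrough hstrong hI huv hvu hx hux (hvy.tail ⟨hyx, hx⟩)

theorem hasDirWalkThrough_or_hasDirWalkThrough (hstrong : ∀ x y, ReflTransGen D.Adj x y)
    (hI : D.und.IsComponentAttachedTo I u v) :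
    D.HasDirWalkThrough I u v ∨ D.HasDirWalkThrough I v u := by
  by_contra! ⟨huv, hvu⟩
  obtain ⟨p, hp, hup⟩ := exists_reachesThrough_left hstrong hI hvu
  obtain ⟨q, hq, hvq⟩ := exists_reachesThrough_left hstrong hI.symm huv
  obtain ⟨w⟩ := hI.connected.preconnected ⟨p, hp⟩ ⟨q, hq⟩
  obtain ⟨d, -, hd, hd'⟩ := w.exists_boundary_dart {y | D.ReachesThrough I u y} hup
    fun huq => not_reachesThrough_of_reachesThrough hstrong hI huv hvu hq huq hvq
  exact hd' (hd.of_adj hstrong hI huv hvu d.fst.2 d.snd.2 d.adj)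

end Dgraph

theorem stmt1_general {V : Type*} (G : Dgraph V) (hv : G.verts = Set.univ)
    (hs : G.Strong) (h2 : KConnected 2 G.und)
    (u v : V) (huv : u ≠ v)
    (K : (G.und.induce ({u, v}ᶜ : Set V)).ConnectedComponent) :
    ∃ (a b : V) (w : G.und.Walk a b),
      ({a, b} : Set V) = {u, v} ∧ G.DirWalk w ∧ w.IsPath ∧ 2 ≤ w.length ∧
      ∀ x ∈ w.support, x = u ∨ x = v ∨
        ∃ y : ({u, v}ᶜ : Set V), y ∈ K.supp ∧ (y : V) = x := by
  have hstrong : ∀ x y, ReflTransGen G.Adj x y := fun x y =>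
    (hs x (hv ▸ mem_univ x) y (hv ▸ mem_univ y)).choose_spec.reflTransGen
  have hcompl : ∀ x, (G.und.induce {x}ᶜ).Connected := fun x => h2.2 {x} (by simp)
  have hI := K.isComponentAttachedTo huv (hcompl u) (hcompl v)
  rcases Dgraph.hasDirWalkThrough_or_hasDirWalkThrough hstrong hI with h | h
  · obtain ⟨w, hw, hpath, hlen, hsupp⟩ := h.exists_dirPath hI.left_notMem hI.right_notMem huv
    exact ⟨u, v, w, rfl, hw, hpath, hlen, hsupp⟩
  · obtain ⟨w, hw, hpath, hlen, hsupp⟩ :=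
      h.exists_dirPath hI.right_notMem hI.left_notMem huv.symm
    refine ⟨v, u, w, pair_comm v u, hw, hpath, hlen, fun x hx => ?_⟩
    rcases hsupp x hx with h | h | h
    exacts [.inr (.inl h), .inl h, .inr (.inr h)]

/-- if `G` is strong with 2-connected underlying graph and `{u,v}` is a
cutset, then for every component `K` of `G⁻ \ {u,v}` there is a directed path of
length at least two between `u` and `v` (in one of the two directions) all of whose
vertices lie in `K ∪ {u,v}`. -/
theorem stmt1 {V : Type*} [Fintype V] (G : Dgraph V) (hv : G.verts = Set.univ)
    (hnd : G.NoDigon) (hs : G.Strong) (h2 : KConnected 2 G.und)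
    (u v : V) (huv : u ≠ v)
    (hdis : ¬ (G.und.induce ({u, v}ᶜ : Set V)).Connected)
    (K : (G.und.induce ({u, v}ᶜ : Set V)).ConnectedComponent) :
    ∃ (a b : V) (w : G.und.Walk a b),
      ({a, b} : Set V) = {u, v} ∧ G.DirWalk w ∧ w.IsPath ∧ 2 ≤ w.length ∧
      ∀ x ∈ w.support, x = u ∨ x = v ∨
        ∃ y : ({u, v}ᶜ : Set V), y ∈ K.supp ∧ (y : V) = x :=
  stmt1_general G hv hs h2 u v huv K
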